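/- arXiv:1206.0528 — 2 statements merged into one kernel-verified Lean document; each statement's English description precedes it below -/
import Mathlib

section
/- Let (V, R, α ↦ α∨) be a reduced crystallographic root system with coroot lattice Q∨, and let Λ∨ ⊆ V be a lattice (a discrete subgroup spanning V) with Q∨ ⊆ Λ∨ and α(Λ∨) ⊆ ℤ for every root α. Each reflection s_α preserves Λ∨ and hence induces an automorphism s̄_α of the torus T := V/Λ∨. For a root α set K_α := { x + Λ∨ ∈ T : α(x) ∈ ℤ }. Then: (i) every element of K_α is fixed by s̄_α, i.e. K_α ⊆ T^{s̄_α} := { t ∈ T : s̄_α(t) = t }; and (ii) if moreover Λ∨/Q∨ is torsion-free, then K_α = T^{s̄_α}. -/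
open Module

/-- A reduced crystallographic root system on a real vector space `V`:
the roots are a finite set of non-zero linear functionals on `V`, each root `α`
has a coroot `α∨ ∈ V` with `α(α∨) = 2`, pairings of roots with coroots are
integers, the reflections `s_α : x ↦ x - α(x)·α∨` (resp. their dual actions
`λ ↦ λ - λ(α∨)·α`) permute the coroots (resp. the roots), and the only roots
proportional to a root `α` are `±α`. -/
structure RedCrystRootSystem (V : Type*) [AddCommGroup V] [Module ℝ V] where
  R : Finset (Module.Dual ℝ V)
  coroot : Module.Dual ℝ V → V
  ne_zero : ∀ α ∈ R, α ≠ 0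
  root_coroot_two : ∀ α ∈ R, α (coroot α) = 2
  crystallographic : ∀ α ∈ R, ∀ β ∈ R, ∃ n : ℤ, β (coroot α) = (n : ℝ)
  refl_root_mem : ∀ α ∈ R, ∀ β ∈ R, β - β (coroot α) • α ∈ R
  refl_coroot_mem : ∀ α ∈ R, ∀ β ∈ R,
    ∃ γ ∈ R, coroot β - α (coroot β) • coroot α = coroot γ
  reduced : ∀ α ∈ R, ∀ β ∈ R, ∀ c : ℝ, β = c • α → β = α ∨ β = -α

namespace RedCrystRootSystem

variable {V : Type*} [AddCommGroup V] [Module ℝ V] (S : RedCrystRootSystem V)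

/-- The reflection `s_α : x ↦ x - α(x)·α∨` associated to a root `α`, as a linear map. -/
def reflMap (α : Module.Dual ℝ V) : V →ₗ[ℝ] V :=
  LinearMap.id - α.smulRight (S.coroot α)

@[simp] lemma reflMap_apply (α : Module.Dual ℝ V) (x : V) :
    S.reflMap α x = x - α x • S.coroot α := rfl

/-- A linear automorphism of `V` is a reflection of the root system if it is
given by `x ↦ x - α(x)·α∨` for some root `α`. -/
def IsReflection (e : V ≃ₗ[ℝ] V) : Prop :=
  ∃ α ∈ S.R, ∀ x : V, e x = x - α x • S.coroot α

/-- The Weyl group: the subgroup of linear automorphisms of `V` generated by the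
reflections `s_α`, `α ∈ R`. -/
def weylGroup : Subgroup (V ≃ₗ[ℝ] V) :=
  Subgroup.closure {e : V ≃ₗ[ℝ] V | S.IsReflection e}

/-- The coroot lattice `Q∨`: the additive subgroup of `V` generated by the coroots. -/
def corootLattice : AddSubgroup V :=
  AddSubgroup.closure (S.coroot '' ↑S.R)

end RedCrystRootSystem

/-- `e` fixes the point `t` of the torus `V ⧸ Λ`. This is expressed by asking for an
additive endomorphism of `V ⧸ Λ` covering `e` (which exists iff `e` preserves `Λ`,
and is then unique) fixing `t`. -/
def FixesInTorus {V : Type*} [AddCommGroup V] [Module ℝ V]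
    (Λ : AddSubgroup V) (e : V ≃ₗ[ℝ] V) (t : V ⧸ Λ) : Prop :=
  ∃ f : (V ⧸ Λ) →+ (V ⧸ Λ),
    (∀ x : V, f (QuotientAddGroup.mk x) = QuotientAddGroup.mk (e x)) ∧ f t = t

/-!
The inclusion `K_α ⊆ T^{s̄_α}` is immediate from `s_α x = x - α(x)α∨`. Conversely, if `s̄_α`
fixes `x + Λ∨` then `α(x)α∨ ∈ Λ∨`, so `2α(x) = α(α(x)α∨) ∈ ℤ`; were `α(x)` a half-integer,
`α∨/2` would lie in `Λ∨`, hence in `Q∨` as `Λ∨/Q∨` is torsion-free.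

That `α∨/2 ∉ Q∨` is a parity argument. Choose one root out of each pair `±β` and let `ℓ` be
their sum. If `v ∈ ℝθ∨` has integral pairings with all roots, `s_θ` permutes the chosen roots
up to sign and negates their values at `v`; up to sign it fixes only `±θ` and the roots
vanishing on `θ∨`, so `ℓ(v) ≡ θ(v) mod 2`. Taking `v = γ∨` shows `ℓ(Q∨) ⊆ 2ℤ`, while
`v = α∨/2` would give `ℓ(v) ≡ 1`.
-/

lemma AddCircle.neg_coe_eq_coe_of_int {x : ℝ} (hx : ∃ n : ℤ, x = n) :
    -(x : AddCircle (2 : ℝ)) = x := by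
  obtain ⟨n, rfl⟩ := hx
  rw [← AddCircle.coe_neg, ← sub_eq_zero, ← AddCircle.coe_sub, AddCircle.coe_eq_zero_iff]
  exact ⟨-n, by ring⟩

lemma AddSubgroup.mem_of_nsmul_mem {G : Type*} [AddCommGroup G] {K Λ : AddSubgroup G}
    (htf : ∀ g : ↥Λ ⧸ K.addSubgroupOf Λ, g ≠ 0 → ¬IsOfFinAddOrder g) {n : ℕ} (hn : n ≠ 0)
    {w : G} (hw : w ∈ Λ) (hnw : n • w ∈ K) : w ∈ K := by
  by_contra hwK
  refine htf (⟨w, hw⟩ : ↥Λ) (by rwa [Ne, QuotientAddGroup.eq_zero_iff, mem_addSubgroupOf]) ?_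
  refine isOfFinAddOrder_iff_nsmul_eq_zero.2 ⟨n, Nat.pos_of_ne_zero hn, ?_⟩
  rw [← QuotientAddGroup.mk_nsmul, QuotientAddGroup.eq_zero_iff, mem_addSubgroupOf]
  exact hnw

namespace RedCrystRootSystem

variable {V : Type*} [AddCommGroup V] [Module ℝ V] (S : RedCrystRootSystem V)

lemma coroot_mem_corootLattice {α : Dual ℝ V} (hα : α ∈ S.R) :
    S.coroot α ∈ S.corootLattice :=
  AddSubgroup.subset_closure ⟨α, hα, rfl⟩

lemma apply_mem_zmultiples_of_mem_corootLattice (ℓ : Dual ℝ V) (a : ℝ)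
    (hℓ : ∀ γ ∈ S.R, ℓ (S.coroot γ) ∈ AddSubgroup.zmultiples a) {v : V}
    (hv : v ∈ S.corootLattice) : ℓ v ∈ AddSubgroup.zmultiples a := by
  have hle : S.corootLattice ≤ (AddSubgroup.zmultiples a).comap ℓ.toAddMonoidHom :=
    (AddSubgroup.closure_le _).2 (by rintro _ ⟨γ, hγ, rfl⟩; exact hℓ γ hγ)
  exact hle hv

lemma root_apply_int_of_mem_corootLattice {β : Dual ℝ V} (hβ : β ∈ S.R) {v : V}
    (hv : v ∈ S.corootLattice) : ∃ n : ℤ, β v = n := by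
  have hmem := S.apply_mem_zmultiples_of_mem_corootLattice β 1 (fun γ hγ => by
    obtain ⟨n, hn⟩ := S.crystallographic γ hγ β hβ
    exact AddSubgroup.mem_zmultiples_iff.2 ⟨n, by rw [hn, zsmul_one]⟩) hv
  obtain ⟨n, hn⟩ := AddSubgroup.mem_zmultiples_iff.1 hmem
  exact ⟨n, by rw [← hn, zsmul_one]⟩

lemma neg_mem_R {β : Dual ℝ V} (hβ : β ∈ S.R) : -β ∈ S.R := by
  have h := S.refl_root_mem β hβ β hβ
  rwa [S.root_coroot_two β hβ, two_smul, sub_add_cancel_left] at h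

lemma ne_neg_of_mem_R {β : Dual ℝ V} (hβ : β ∈ S.R) : β ≠ -β := fun h => by
  have h2 : (2 : ℝ) • β = 0 := by rw [two_smul]; nth_rewrite 2 [h]; exact add_neg_cancel β
  exact S.ne_zero β hβ ((smul_eq_zero.1 h2).resolve_left two_ne_zero)

def dualRefl (θ β : Dual ℝ V) : Dual ℝ V := β - β (S.coroot θ) • θ

lemma dualRefl_mem {θ β : Dual ℝ V} (hθ : θ ∈ S.R) (hβ : β ∈ S.R) : S.dualRefl θ β ∈ S.R :=
  S.refl_root_mem θ hθ β hβ

lemma dualRefl_dualRefl {θ : Dual ℝ V} (hθ : θ ∈ S.R) (β : Dual ℝ V) :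
    S.dualRefl θ (S.dualRefl θ β) = β := by
  simp only [dualRefl, LinearMap.sub_apply, LinearMap.smul_apply, smul_eq_mul,
    S.root_coroot_two θ hθ]
  module

lemma dualRefl_neg (θ β : Dual ℝ V) : S.dualRefl θ (-β) = -S.dualRefl θ β := by
  simp only [dualRefl, LinearMap.neg_apply]
  module

lemma dualRefl_self {θ : Dual ℝ V} (hθ : θ ∈ S.R) : S.dualRefl θ θ = -θ := by
  simp only [dualRefl, S.root_coroot_two θ hθ]
  module

lemma dualRefl_apply_smul_coroot {θ : Dual ℝ V} (hθ : θ ∈ S.R) (β : Dual ℝ V) (c : ℝ) :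
    S.dualRefl θ β (c • S.coroot θ) = -β (c • S.coroot θ) := by
  simp only [dualRefl, LinearMap.sub_apply, LinearMap.smul_apply, map_smul, smul_eq_mul,
    S.root_coroot_two θ hθ]
  ring

lemma apply_coroot_eq_zero_of_dualRefl_eq {θ β : Dual ℝ V} (hθ : θ ∈ S.R)
    (h : S.dualRefl θ β = β) : β (S.coroot θ) = 0 :=
  (smul_eq_zero.1 (sub_eq_self.1 h)).resolve_right (S.ne_zero θ hθ)

lemma eq_or_eq_neg_of_dualRefl_eq_neg {θ β : Dual ℝ V} (hθ : θ ∈ S.R) (hβ : β ∈ S.R)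
    (h : S.dualRefl θ β = -β) : β = θ ∨ β = -θ := by
  refine S.reduced θ hθ β hβ (2⁻¹ * β (S.coroot θ)) ?_
  have h2 : (2 : ℝ) • β = β (S.coroot θ) • θ := by
    rw [dualRefl, sub_eq_iff_eq_add, ← sub_eq_iff_eq_add'] at h
    rw [two_smul, ← h, sub_neg_eq_add]
  rw [mul_smul, ← h2, smul_smul, inv_mul_cancel₀ two_ne_zero, one_smul]

section rootReps

open Classical

/-- One root out of each pair `±β`. -/
noncomputable def rootReps : Finset (Dual ℝ V) := S.R.filter fun β => WellOrderingRel β (-β)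

lemma mem_R_of_mem_rootReps {β : Dual ℝ V} (h : β ∈ S.rootReps) : β ∈ S.R :=
  (Finset.mem_filter.1 h).1

lemma neg_notMem_rootReps {β : Dual ℝ V} (h : β ∈ S.rootReps) : -β ∉ S.rootReps := by
  intro h'
  have r := (Finset.mem_filter.1 h).2
  have r' := (Finset.mem_filter.1 h').2
  rw [neg_neg] at r'
  exact irrefl_of WellOrderingRel β (trans_of WellOrderingRel r r')

lemma mem_or_neg_mem_rootReps {β : Dual ℝ V} (hβ : β ∈ S.R) :
    β ∈ S.rootReps ∨ -β ∈ S.rootReps := by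
  rcases trichotomous_of WellOrderingRel β (-β) with h | h | h
  · exact Or.inl (Finset.mem_filter.2 ⟨hβ, h⟩)
  · exact absurd h (S.ne_neg_of_mem_R hβ)
  · exact Or.inr (Finset.mem_filter.2 ⟨S.neg_mem_R hβ, by rwa [neg_neg]⟩)

noncomputable def rootRep (β : Dual ℝ V) : Dual ℝ V := if β ∈ S.rootReps then β else -β

lemma rootRep_eq_or_eq_neg (β : Dual ℝ V) : S.rootRep β = β ∨ S.rootRep β = -β := by
  unfold rootRep; split_ifs <;> simp

lemma rootRep_mem_rootReps {β : Dual ℝ V} (hβ : β ∈ S.R) : S.rootRep β ∈ S.rootReps := by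
  unfold rootRep; split_ifs with h
  · exact h
  · exact (S.mem_or_neg_mem_rootReps hβ).resolve_left h

lemma rootRep_of_mem_rootReps {β : Dual ℝ V} (h : β ∈ S.rootReps) : S.rootRep β = β :=
  if_pos h

lemma rootRep_neg {β : Dual ℝ V} (hβ : β ∈ S.R) : S.rootRep (-β) = S.rootRep β := by
  rcases S.mem_or_neg_mem_rootReps hβ with h | h
  · rw [S.rootRep_of_mem_rootReps h, rootRep, if_neg (S.neg_notMem_rootReps h), neg_neg]
  · rw [S.rootRep_of_mem_rootReps h, rootRep, if_neg (fun h' => S.neg_notMem_rootReps h' h)]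

lemma rootRep_congr {β γ : Dual ℝ V} (hβ : β ∈ S.R) (h : γ = β ∨ γ = -β) :
    S.rootRep γ = S.rootRep β := by
  rcases h with rfl | rfl
  exacts [rfl, S.rootRep_neg hβ]

noncomputable def rootRepsSum : Dual ℝ V := ∑ β ∈ S.rootReps, β

end rootReps

/-- The involution of `S.rootReps` induced by `s_θ`. -/
noncomputable def reflRep (θ β : Dual ℝ V) : Dual ℝ V := S.rootRep (S.dualRefl θ β)

lemma reflRep_mem_rootReps {θ β : Dual ℝ V} (hθ : θ ∈ S.R) (hβ : β ∈ S.R) :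
    S.reflRep θ β ∈ S.rootReps :=
  S.rootRep_mem_rootReps (S.dualRefl_mem hθ hβ)

lemma dualRefl_rootRep (θ β : Dual ℝ V) : S.dualRefl θ (S.rootRep β) = S.dualRefl θ β ∨
    S.dualRefl θ (S.rootRep β) = -S.dualRefl θ β := by
  rcases S.rootRep_eq_or_eq_neg β with h | h <;> rw [h, ← S.dualRefl_neg] <;> simp

lemma reflRep_reflRep {θ β : Dual ℝ V} (hθ : θ ∈ S.R) (hβ : β ∈ S.rootReps) :
    S.reflRep θ (S.reflRep θ β) = β := by
  have h := S.dualRefl_rootRep θ (S.dualRefl θ β)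
  rw [S.dualRefl_dualRefl hθ] at h
  exact (S.rootRep_congr (S.mem_R_of_mem_rootReps hβ) h).trans (S.rootRep_of_mem_rootReps hβ)

lemma reflRep_rootRep_self {θ : Dual ℝ V} (hθ : θ ∈ S.R) :
    S.reflRep θ (S.rootRep θ) = S.rootRep θ := by
  have h := S.dualRefl_rootRep θ θ
  rw [S.dualRefl_self hθ, neg_neg] at h
  exact S.rootRep_congr hθ h.symm

lemma apply_coroot_eq_zero_of_reflRep_eq {θ β : Dual ℝ V} (hθ : θ ∈ S.R)
    (hβ : β ∈ S.rootReps) (hfix : S.reflRep θ β = β) (hne : β ≠ S.rootRep θ) :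
    β (S.coroot θ) = 0 := by
  rcases S.rootRep_eq_or_eq_neg (S.dualRefl θ β) with h | h <;> rw [← reflRep, hfix] at h
  · exact S.apply_coroot_eq_zero_of_dualRefl_eq hθ h.symm
  · have hβθ := S.eq_or_eq_neg_of_dualRefl_eq_neg hθ (S.mem_R_of_mem_rootReps hβ)
      (neg_eq_iff_eq_neg.mp h.symm)
    exact absurd ((S.rootRep_of_mem_rootReps hβ).symm.trans (S.rootRep_congr hθ hβθ)) hne

lemma rootRepsSum_apply_smul_coroot {θ : Dual ℝ V} (hθ : θ ∈ S.R) (c : ℝ)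
    (hint : ∀ β ∈ S.R, ∃ n : ℤ, β (c • S.coroot θ) = n) :
    (S.rootRepsSum (c • S.coroot θ) : AddCircle (2 : ℝ)) = (2 * c : ℝ) := by
  classical
  set v := c • S.coroot θ
  set f : Dual ℝ V → AddCircle (2 : ℝ) := fun β => (β v : ℝ)
  set β₀ := S.rootRep θ
  have hf_neg : ∀ β, f (-β) = -f β := fun β => AddCircle.coe_neg _
  have hneg_f : ∀ β ∈ S.R, -f β = f β := fun β hβ =>
    AddCircle.neg_coe_eq_coe_of_int (hint β hβ)
  have hf_rootRep : ∀ β ∈ S.R, f (S.rootRep β) = f β := fun β hβ => by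
    rcases S.rootRep_eq_or_eq_neg β with h | h <;> rw [h]
    rw [hf_neg, hneg_f β hβ]
  have hf_reflRep : ∀ β ∈ S.R, f (S.reflRep θ β) = f β := fun β hβ => by
    rw [reflRep, hf_rootRep _ (S.dualRefl_mem hθ hβ), ← hneg_f β hβ]
    exact (congrArg _ (S.dualRefl_apply_smul_coroot hθ β c)).trans (AddCircle.coe_neg _)
  -- `reflRep θ` pairs up the remaining terms, whose values agree mod 2; its fixed points vanish
  have hsum : ∑ β ∈ S.rootReps.erase β₀, f β = 0 := by
    refine Finset.sum_involution (fun β _ => S.reflRep θ β) (fun β hβ => ?_)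
      (fun β hβ hfβ hfix => hfβ ?_)
      (fun β hβ => Finset.mem_erase.2 ⟨fun h => Finset.ne_of_mem_erase hβ ?_, ?_⟩)
      (fun β hβ => S.reflRep_reflRep hθ (Finset.mem_of_mem_erase hβ))
    · have hβR := S.mem_R_of_mem_rootReps (Finset.mem_of_mem_erase hβ)
      rw [hf_reflRep β hβR, ← neg_eq_iff_add_eq_zero, hneg_f β hβR]
    · have h0 := S.apply_coroot_eq_zero_of_reflRep_eq hθ (Finset.mem_of_mem_erase hβ) hfix
        (Finset.ne_of_mem_erase hβ)
      simp [f, v, h0]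
    · rw [← S.reflRep_reflRep hθ (Finset.mem_of_mem_erase hβ), h, S.reflRep_rootRep_self hθ]
    · exact S.reflRep_mem_rootReps hθ (S.mem_R_of_mem_rootReps (Finset.mem_of_mem_erase hβ))
  calc (S.rootRepsSum v : AddCircle (2 : ℝ)) = ∑ β ∈ S.rootReps, f β := by
        simp [rootRepsSum, f, LinearMap.sum_apply]
    _ = f β₀ := by rw [← Finset.add_sum_erase _ _ (S.rootRep_mem_rootReps hθ), hsum, add_zero]
    _ = f θ := hf_rootRep θ hθ
    _ = (2 * c : ℝ) := by simp [f, v, S.root_coroot_two θ hθ, mul_comm]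

lemma rootRepsSum_coroot_mem_zmultiples {γ : Dual ℝ V} (hγ : γ ∈ S.R) :
    S.rootRepsSum (S.coroot γ) ∈ AddSubgroup.zmultiples (2 : ℝ) := by
  have h := S.rootRepsSum_apply_smul_coroot hγ 1 (by simpa using S.crystallographic γ hγ)
  rw [one_smul, mul_one, AddCircle.coe_period, AddCircle.coe_eq_zero_iff] at h
  exact AddSubgroup.mem_zmultiples_iff.2 h

lemma half_smul_coroot_notMem_corootLattice {α : Dual ℝ V} (hα : α ∈ S.R) :
    (2⁻¹ : ℝ) • S.coroot α ∉ S.corootLattice := by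
  intro hz
  have heven := S.apply_mem_zmultiples_of_mem_corootLattice S.rootRepsSum 2
    (fun γ hγ => S.rootRepsSum_coroot_mem_zmultiples hγ) hz
  have hodd := S.rootRepsSum_apply_smul_coroot hα 2⁻¹
    (fun β hβ => S.root_apply_int_of_mem_corootLattice hβ hz)
  rw [(AddCircle.coe_eq_zero_iff _).2 (AddSubgroup.mem_zmultiples_iff.1 heven),
    mul_inv_cancel₀ two_ne_zero, eq_comm, AddCircle.coe_eq_zero_iff] at hodd
  obtain ⟨n, hn⟩ := hodd
  have h : n * 2 = 1 := by rw [zsmul_eq_mul] at hn; exact_mod_cast hn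
  omega

lemma mk_reflMap_eq_mk_iff (Λ : AddSubgroup V) (α : Dual ℝ V) (x : V) :
    (QuotientAddGroup.mk (S.reflMap α x) : V ⧸ Λ) = QuotientAddGroup.mk x ↔
      α x • S.coroot α ∈ Λ := by
  rw [QuotientAddGroup.eq, reflMap_apply, neg_sub, sub_add_cancel]

lemma exists_int_eq_of_smul_coroot_mem {Λ : AddSubgroup V} (hQΛ : S.corootLattice ≤ Λ)
    (htf : ∀ g : ↥Λ ⧸ S.corootLattice.addSubgroupOf Λ, g ≠ 0 → ¬IsOfFinAddOrder g)
    {α : Dual ℝ V} (hα : α ∈ S.R) (hint : ∀ v ∈ Λ, ∃ n : ℤ, α v = n) {a : ℝ}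
    (ha : a • S.coroot α ∈ Λ) : ∃ n : ℤ, a = n := by
  obtain ⟨n, hn⟩ := hint _ ha
  rw [map_smul, smul_eq_mul, S.root_coroot_two α hα] at hn
  obtain ⟨m, rfl | rfl⟩ := Int.even_or_odd' n
  · exact ⟨m, by push_cast at hn; linarith⟩
  · have hhalf : (2⁻¹ : ℝ) • S.coroot α ∈ Λ := by
      have h : (2⁻¹ : ℝ) • S.coroot α = a • S.coroot α - m • S.coroot α := by
        rw [← Int.cast_smul_eq_zsmul ℝ, ← sub_smul]
        push_cast at hn
        congr 1
        linarith
      rw [h]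
      exact sub_mem ha (zsmul_mem (hQΛ (S.coroot_mem_corootLattice hα)) m)
    refine absurd (AddSubgroup.mem_of_nsmul_mem htf two_ne_zero hhalf ?_)
      (S.half_smul_coroot_notMem_corootLattice hα)
    rw [← Nat.cast_smul_eq_nsmul ℝ, smul_smul, Nat.cast_ofNat, mul_inv_cancel₀ two_ne_zero,
      one_smul]
    exact S.coroot_mem_corootLattice hα

end RedCrystRootSystem

theorem statement1_general {V : Type*} [AddCommGroup V] [Module ℝ V]
    (S : RedCrystRootSystem V) (Λ : AddSubgroup V)
    (hQΛ : S.corootLattice ≤ Λ)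
    (hint : ∀ α ∈ S.R, ∀ v ∈ Λ, ∃ n : ℤ, α v = (n : ℝ))
    (α : Module.Dual ℝ V) (hα : α ∈ S.R) :
    -- `s_α` preserves `Λ∨` ...
    (∀ v ∈ Λ, S.reflMap α v ∈ Λ) ∧
    -- ... hence induces an automorphism `s̄_α` of `T = V ⧸ Λ∨`; for any additive map
    -- `s̄` of `T` covering `s_α`:
    ∀ sbar : (V ⧸ Λ) →+ (V ⧸ Λ),
      (∀ x : V, sbar (QuotientAddGroup.mk x) = QuotientAddGroup.mk (S.reflMap α x)) →
      -- (i) every element of `K_α` is fixed by `s̄_α`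
      ({t : V ⧸ Λ | ∃ x : V, QuotientAddGroup.mk x = t ∧ ∃ n : ℤ, α x = (n : ℝ)} ⊆
        {t : V ⧸ Λ | sbar t = t}) ∧
      -- (ii) if `Λ∨/Q∨` is torsion-free then `K_α = T^{s̄_α}`
      ((∀ g : ↥Λ ⧸ (S.corootLattice.addSubgroupOf Λ), g ≠ 0 → ¬IsOfFinAddOrder g) →
        {t : V ⧸ Λ | ∃ x : V, QuotientAddGroup.mk x = t ∧ ∃ n : ℤ, α x = (n : ℝ)} =
          {t : V ⧸ Λ | sbar t = t}) := by
  have hcoroot : S.coroot α ∈ Λ := hQΛ (S.coroot_mem_corootLattice hα)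
  have hint_smul : ∀ {a : ℝ}, (∃ n : ℤ, a = n) → a • S.coroot α ∈ Λ := by
    rintro _ ⟨n, rfl⟩
    rw [Int.cast_smul_eq_zsmul ℝ n (S.coroot α)]
    exact zsmul_mem hcoroot n
  refine ⟨fun v hv => sub_mem hv (hint_smul (hint α hα v hv)), fun sbar hsbar => ?_⟩
  have hK : {t : V ⧸ Λ | ∃ x : V, QuotientAddGroup.mk x = t ∧ ∃ n : ℤ, α x = (n : ℝ)} ⊆
      {t : V ⧸ Λ | sbar t = t} := by
    rintro _ ⟨x, rfl, hx⟩
    exact (hsbar x).trans ((S.mk_reflMap_eq_mk_iff Λ α x).2 (hint_smul hx))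
  refine ⟨hK, fun htf => hK.antisymm ?_⟩
  rintro t (ht : sbar t = t)
  obtain ⟨x, rfl⟩ := QuotientAddGroup.mk_surjective t
  have hfix := (S.mk_reflMap_eq_mk_iff Λ α x).1 ((hsbar x).symm.trans ht)
  exact ⟨x, rfl, S.exists_int_eq_of_smul_coroot_mem hQΛ htf hα (hint α hα) hfix⟩

/-- Let `(V, R, α ↦ α∨)` be a reduced crystallographic root system with
coroot lattice `Q∨ ⊆ Λ∨ ⊆ V`, where `Λ∨` is a lattice (the ℤ-span of an ℝ-basis of `V`)
with `α(Λ∨) ⊆ ℤ` for all roots `α`.  Each reflection `s_α` preserves `Λ∨`, hence induces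
an automorphism `s̄_α` of the torus `T = V ⧸ Λ∨`.  With
`K_α = { x + Λ∨ : α(x) ∈ ℤ }` one has: (i) `K_α ⊆ T^{s̄_α}`; and (ii) if `Λ∨/Q∨` is
torsion-free then `K_α = T^{s̄_α}`. -/
theorem statement1 {V : Type*} [AddCommGroup V] [Module ℝ V] [FiniteDimensional ℝ V]
    (S : RedCrystRootSystem V) (Λ : AddSubgroup V)
    (hlat : ∃ b : Basis (Fin (Module.finrank ℝ V)) ℝ V,
      Λ = AddSubgroup.closure (Set.range ⇑b))
    (hQΛ : S.corootLattice ≤ Λ)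
    (hint : ∀ α ∈ S.R, ∀ v ∈ Λ, ∃ n : ℤ, α v = (n : ℝ))
    (α : Module.Dual ℝ V) (hα : α ∈ S.R) :
    -- `s_α` preserves `Λ∨` ...
    (∀ v ∈ Λ, S.reflMap α v ∈ Λ) ∧
    -- ... hence induces an automorphism `s̄_α` of `T = V ⧸ Λ∨`; for any additive map
    -- `s̄` of `T` covering `s_α`:
    ∀ sbar : (V ⧸ Λ) →+ (V ⧸ Λ),
      (∀ x : V, sbar (QuotientAddGroup.mk x) = QuotientAddGroup.mk (S.reflMap α x)) →
      -- (i) every element of `K_α` is fixed by `s̄_α`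
      ({t : V ⧸ Λ | ∃ x : V, QuotientAddGroup.mk x = t ∧ ∃ n : ℤ, α x = (n : ℝ)} ⊆
        {t : V ⧸ Λ | sbar t = t}) ∧
      -- (ii) if `Λ∨/Q∨` is torsion-free then `K_α = T^{s̄_α}`
      ((∀ g : ↥Λ ⧸ (S.corootLattice.addSubgroupOf Λ), g ≠ 0 → ¬IsOfFinAddOrder g) →
        {t : V ⧸ Λ | ∃ x : V, QuotientAddGroup.mk x = t ∧ ∃ n : ℤ, α x = (n : ℝ)} =
          {t : V ⧸ Λ | sbar t = t}) :=
  statement1_general S Λ hQΛ hint α hα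
end

section
/- Let (V, R, α ↦ α∨) be a reduced crystallographic root system of type G₂, i.e. with dim V = 2 and exactly 12 roots, let Q∨ ⊆ V be its coroot lattice, W its Weyl group, and T := V/Q∨ the torus on which W acts (W preserves Q∨). Then: (i) −id_V ∈ W; (ii) the fixed-point set T^{−id} = { t ∈ T : −t = t } has exactly four elements; (iii) for each of the three non-zero elements t ∈ T^{−id}, exactly two of the reflections s_α (α ∈ R, counting s_α = s_{−α} once) fix t in T, and the product of these two reflections equals −id_V; (iv) the three resulting two-element sets of reflections, one for each non-zero t ∈ T^{−id}, are pairwise distinct. -/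
open Module

/-!
Every root `α` has an orthogonal root `α'` (a parity argument), unique up to sign because `V` is a
plane, and then `s_α s_α' = -1`. Two roots that are neither proportional nor orthogonal have Coxeter
weight `β(α∨) α(β∨) ∈ {1, 2, 3}`, and weight `2` is impossible because for any third such root `γ`
the matrix of pairings of `α, β, γ` with their coroots is singular. Hence their pairings are odd,
and since the Coxeter weights of a root with `α` and with `α'` add up to `4`, some pair has weight
`3`. Its Cartan matrix is unimodular, so `Q∨ = ℤα∨ ⊕ ℤβ∨` and `T^{-id} = ½Q∨ / Q∨` has four points;
the non-zero ones are `[γ∨/2]` for one root `γ` in each of the three orthogonal pairs of lines, and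
by oddness of the pairings `s_δ` fixes `[γ∨/2]` exactly when `δ` is `±γ` or `±γ'`.
-/

section LinearAlgebra

variable {K V : Type*} [Field K] [AddCommGroup V] [Module K V] [FiniteDimensional K V]

lemma eq_zero_of_linearIndependent_of_apply_eq_zero (hdim : finrank K V = 2)
    {f g : Dual K V} (hfg : LinearIndependent K ![f, g]) {x : V} (hf : f x = 0) (hg : g x = 0) :
    x = 0 := by
  have hspan : Submodule.span K (Set.range ![f, g]) = ⊤ :=
    hfg.span_eq_top_of_card_eq_finrank' (by simp [Subspace.dual_finrank_eq, hdim])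
  refine (Module.forall_dual_apply_eq_zero_iff K x).mp fun φ ↦ ?_
  have hφ : φ ∈ Submodule.span K {f, g} := by
    rw [← Matrix.range_cons_cons_empty, hspan]; trivial
  obtain ⟨a, b, rfl⟩ := Submodule.mem_span_pair.mp hφ
  simp [hf, hg]

lemma det_apply_eq_zero_of_finrank_lt {ι : Type*} [Fintype ι] [DecidableEq ι]
    (hι : finrank K V < Fintype.card ι) (f : ι → Dual K V) (v : ι → V) :
    (Matrix.of fun i j ↦ f i (v j)).det = 0 := by
  have hf : ¬ LinearIndependent K f := fun h ↦
    (h.fintype_card_le_finrank.trans_eq (Subspace.dual_finrank_eq)).not_gt hι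
  obtain ⟨c, hc, i, hi⟩ := Fintype.not_linearIndependent_iff.mp hf
  refine Matrix.exists_vecMul_eq_zero_iff.mp ⟨c, fun h ↦ hi (congrFun h i), funext fun j ↦ ?_⟩
  simpa [Matrix.vecMul, dotProduct] using congrArg (fun φ : Dual K V ↦ φ (v j)) hc

end LinearAlgebra

lemma even_card_of_involution {ι : Type*} {s : Finset ι} (g : ι → ι) (hg : ∀ a ∈ s, g a ∈ s)
    (hg_ne : ∀ a ∈ s, g a ≠ a) (hgg : ∀ a ∈ s, g (g a) = a) : Even s.card := by
  have := Finset.sum_involution (f := fun _ ↦ (1 : ZMod 2)) (fun a _ ↦ g a) (fun _ _ ↦ rfl)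
    (fun a ha _ ↦ hg_ne a ha) hg hgg
  rwa [Finset.sum_const, nsmul_eq_mul, mul_one, ZMod.natCast_eq_zero_iff_even] at this

section Torus

open QuotientAddGroup

lemma neg_mk_eq_mk_iff {G : Type*} [AddCommGroup G] (Λ : AddSubgroup G) (x : G) :
    -(mk x : G ⧸ Λ) = mk x ↔ x + x ∈ Λ := by
  rw [← mk_neg, QuotientAddGroup.eq, neg_neg]

lemma mem_of_neg_eq_self_of_eq_closure_pair {V : Type*} [AddCommGroup V] [Module ℝ V]
    {Λ : AddSubgroup V} {a b : V} (hΛ : Λ = AddSubgroup.closure {a, b}) {t : V ⧸ Λ}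
    (ht : -t = t) :
    t ∈ ({0, mk ((2⁻¹ : ℝ) • a), mk ((2⁻¹ : ℝ) • b), mk ((2⁻¹ : ℝ) • (a + b))} : Set (V ⧸ Λ)) := by
  subst hΛ
  obtain ⟨x, rfl⟩ := mk_surjective t
  obtain ⟨k, l, hkl⟩ := AddSubgroup.mem_closure_pair.mp ((neg_mk_eq_mk_iff _ x).mp ht)
  have hx : x = (2⁻¹ : ℝ) • (((k % 2 : ℤ) : ℝ) • a + ((l % 2 : ℤ) : ℝ) • b) +
      ((k / 2) • a + (l / 2) • b) := by
    have hk : (k : ℝ) = (k % 2 : ℤ) + 2 * (k / 2 : ℤ) := by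
      exact_mod_cast (k.emod_add_mul_ediv 2).symm
    have hl : (l : ℝ) = (l % 2 : ℤ) + 2 * (l / 2 : ℤ) := by
      exact_mod_cast (l.emod_add_mul_ediv 2).symm
    calc x = (2⁻¹ : ℝ) • (x + x) := by module
      _ = _ := by
        rw [← hkl, ← Int.cast_smul_eq_zsmul ℝ k, ← Int.cast_smul_eq_zsmul ℝ l, hk, hl,
          ← Int.cast_smul_eq_zsmul ℝ (k / 2), ← Int.cast_smul_eq_zsmul ℝ (l / 2)]
        module
  rw [hx, mk_add_of_mem _ (AddSubgroup.mem_closure_pair.mpr ⟨_, _, rfl⟩)]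
  rcases Int.emod_two_eq_zero_or_one k with hk | hk <;>
    rcases Int.emod_two_eq_zero_or_one l with hl | hl <;> simp [hk, hl]

end Torus

lemma two_inv_mul_ne_intCast {n : ℤ} (hn : Odd n) (z : ℤ) : (2⁻¹ : ℝ) * n ≠ z := by
  intro h
  have : n = 2 * z := by exact_mod_cast (by linarith : (n : ℝ) = 2 * z)
  exact Int.not_even_iff_odd.mpr hn ⟨z, by omega⟩

namespace RedCrystRootSystem

variable {V : Type*} [AddCommGroup V] [Module ℝ V] (S : RedCrystRootSystem V)
  {α α' β γ γ' δ : Dual ℝ V}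

lemma neg_mem (hα : α ∈ S.R) : -α ∈ S.R := by
  simpa [S.root_coroot_two α hα, two_smul] using S.refl_root_mem α hα α hα

lemma coroot_ne_zero (hα : α ∈ S.R) : S.coroot α ≠ 0 := fun h ↦ by
  simpa [h] using S.root_coroot_two α hα

lemma ne_of_apply_coroot_eq_zero (hα : α ∈ S.R) (h : β (S.coroot α) = 0) : β ≠ α ∧ β ≠ -α := by
  constructor <;> rintro rfl <;> simp [S.root_coroot_two _ hα] at h

lemma linearIndependent_of_ne (hα : α ∈ S.R) (hβ : β ∈ S.R) (h₁ : β ≠ α) (h₂ : β ≠ -α) :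
    LinearIndependent ℝ ![α, β] := by
  refine linearIndependent_fin2.mpr ⟨by simpa using S.ne_zero β hβ, fun c hc ↦ ?_⟩
  have hc₀ : c ≠ 0 := by rintro rfl; exact S.ne_zero α hα (by simpa using hc.symm)
  simp only [Matrix.cons_val_one, Matrix.cons_val_zero] at hc
  rcases S.reduced α hα β hβ c⁻¹ (by rw [← hc, smul_smul, inv_mul_cancel₀ hc₀, one_smul])
    with h | h
  exacts [h₁ h, h₂ h]

lemma reflMap_involutive (hα : α ∈ S.R) : Function.Involutive (S.reflMap α) := fun x ↦ by
  simp only [reflMap_apply, map_sub, map_smul, S.root_coroot_two α hα]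
  module

noncomputable def reflection (hα : α ∈ S.R) : V ≃ₗ[ℝ] V :=
  LinearEquiv.ofInvolutive (S.reflMap α) (S.reflMap_involutive hα)

@[simp] lemma reflection_apply (hα : α ∈ S.R) (x : V) :
    S.reflection hα x = x - α x • S.coroot α := rfl

lemma isReflection_iff {e : V ≃ₗ[ℝ] V} :
    S.IsReflection e ↔ ∃ α, ∃ hα : α ∈ S.R, e = S.reflection hα :=
  ⟨fun ⟨α, hα, he⟩ ↦ ⟨α, hα, LinearEquiv.ext he⟩, fun ⟨α, hα, he⟩ ↦ ⟨α, hα, by simp [he]⟩⟩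

lemma coroot_injOn : Set.InjOn S.coroot S.R := by
  intro α hα β hβ h
  have : IsAddTorsionFree (Dual ℝ V) := .of_isTorsionFree ℝ _
  exact Module.eq_of_mapsTo_reflection_of_mem (f := Dual.eval ℝ V (S.coroot α))
    (g := Dual.eval ℝ V (S.coroot β)) S.R.finite_toSet (S.root_coroot_two α hα)
    (S.root_coroot_two β hβ) (by simpa [h] using S.root_coroot_two α hα)
    (by simpa [← h] using S.root_coroot_two β hβ)
    (fun γ hγ ↦ S.refl_root_mem α hα γ hγ) (fun γ hγ ↦ S.refl_root_mem β hβ γ hγ) hβ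

def coxeterWeight (α β : Dual ℝ V) : ℝ := β (S.coroot α) * α (S.coroot β)

def IsOblique (α β : Dual ℝ V) : Prop := β ≠ α ∧ β ≠ -α ∧ β (S.coroot α) ≠ 0

lemma card_eq_two_mul_card_filter_pos (h : ∀ β ∈ S.R, β (S.coroot α) ≠ 0) :
    S.R.card = 2 * (S.R.filter fun β ↦ 0 < β (S.coroot α)).card := by
  classical
  have hneg : S.R.filter (fun β ↦ ¬ 0 < β (S.coroot α)) =
      (S.R.filter fun β ↦ 0 < β (S.coroot α)).map (Equiv.neg (Dual ℝ V)).toEmbedding := by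
    ext β
    simp only [Finset.mem_filter, Finset.mem_map_equiv, Equiv.neg_symm, Equiv.neg_apply,
      LinearMap.neg_apply, Left.neg_pos_iff, not_lt]
    refine ⟨fun ⟨hβ, hle⟩ ↦ ⟨by simpa using S.neg_mem hβ, (hle.lt_of_ne (h β hβ))⟩,
      fun ⟨hβ, hlt⟩ ↦ ⟨by simpa using S.neg_mem hβ, hlt.le⟩⟩
  rw [← Finset.card_filter_add_card_filter_not (fun β ↦ 0 < β (S.coroot α)), hneg,
    Finset.card_map]
  ring

/-- If no root were orthogonal to `α`, the roots `β` with `β(α∨) > 0` would be half of all roots,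
and `β ↦ β(α∨) α - β = -s_α β` would be a fixed-point-free involution of them except at `α`. -/
lemma exists_apply_coroot_eq_zero (hcard : 4 ∣ S.R.card) (hα : α ∈ S.R) :
    ∃ β ∈ S.R, β (S.coroot α) = 0 := by
  classical
  by_contra! h
  set pos := S.R.filter (fun β ↦ 0 < β (S.coroot α))
  have hα_pos : α ∈ pos := by simp [pos, hα, S.root_coroot_two α hα]
  let ζ : Dual ℝ V → Dual ℝ V := fun β ↦ β (S.coroot α) • α - β
  have hζ_apply : ∀ β, ζ β (S.coroot α) = β (S.coroot α) := fun β ↦ by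
    simp only [LinearMap.sub_apply, LinearMap.smul_apply, S.root_coroot_two α hα, smul_eq_mul, ζ]
    ring
  have hζζ : ∀ β, ζ (ζ β) = β := fun β ↦ by simp only [ζ, hζ_apply]; abel
  have hζ_mem : ∀ β ∈ pos.erase α, ζ β ∈ pos.erase α := by
    intro β hβ
    obtain ⟨hβα, hβ⟩ := Finset.mem_erase.mp hβ
    obtain ⟨hβR, hβpos⟩ := Finset.mem_filter.mp hβ
    refine Finset.mem_erase.mpr ⟨fun hζα ↦ hβα ?_, Finset.mem_filter.mpr ⟨?_, ?_⟩⟩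
    · simpa [hζα, ζ, S.root_coroot_two α hα, two_smul] using (hζζ β).symm
    · simpa [ζ] using S.neg_mem (S.refl_root_mem α hα β hβR)
    · rwa [hζ_apply]
  have hζ_ne : ∀ β ∈ pos.erase α, ζ β ≠ β := by
    intro β hβ hζβ
    obtain ⟨hβα, hβ⟩ := Finset.mem_erase.mp hβ
    obtain ⟨hβR, hβpos⟩ := Finset.mem_filter.mp hβ
    have : β = (β (S.coroot α) / 2) • α := by
      rw [div_eq_inv_mul, mul_smul, eq_inv_smul_iff₀ two_ne_zero, two_smul]
      nth_rewrite 1 [← hζβ]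
      simp [ζ]
    rcases S.reduced α hα β hβR _ this with rfl | rfl
    · exact hβα rfl
    · simp only [LinearMap.neg_apply, S.root_coroot_two α hα, Left.neg_pos_iff] at hβpos
      linarith
  obtain ⟨k, hk⟩ := even_card_of_involution ζ hζ_mem hζ_ne (fun β _ ↦ hζζ β)
  rw [Finset.card_erase_of_mem hα_pos] at hk
  obtain ⟨m, hm⟩ := hcard
  have hpos : S.R.card = 2 * pos.card := S.card_eq_two_mul_card_filter_pos h
  have := Finset.card_pos.mpr ⟨α, hα_pos⟩
  omega

lemma exists_mem_notMem (l : List (Dual ℝ V)) (hl : l.length < S.R.card) :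
    ∃ γ ∈ S.R, γ ∉ l := by
  classical
  obtain ⟨γ, hγ, hγl⟩ := Finset.exists_mem_notMem_of_card_lt_card (s := l.toFinset)
    (l.toFinset_card_le.trans_lt hl)
  exact ⟨γ, hγ, by simpa using hγl⟩

lemma exists_intCast_eq_apply (hγ : γ ∈ S.R) {x : V} (hx : x ∈ S.corootLattice) :
    ∃ n : ℤ, γ x = n := by
  have : S.corootLattice ≤ (Int.castAddHom ℝ).range.comap γ.toAddMonoidHom :=
    (AddSubgroup.closure_le _).mpr (by
      rintro _ ⟨β, hβ, rfl⟩
      obtain ⟨n, hn⟩ := S.crystallographic β hβ γ hγ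
      exact ⟨n, hn.symm⟩)
  obtain ⟨n, hn⟩ := this hx
  exact ⟨n, hn.symm⟩

lemma reflection_mem_corootLattice (hδ : δ ∈ S.R) {x : V} (hx : x ∈ S.corootLattice) :
    S.reflection hδ x ∈ S.corootLattice := by
  have : S.corootLattice ≤ S.corootLattice.comap (S.reflection hδ).toLinearMap.toAddMonoidHom :=
    (AddSubgroup.closure_le _).mpr (by
      rintro _ ⟨β, hβ, rfl⟩
      obtain ⟨γ, hγ, h⟩ := S.refl_coroot_mem δ hδ β hβ
      exact AddSubgroup.subset_closure ⟨γ, hγ, h.symm⟩)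
  exact this hx

lemma fixesInTorus_reflection_iff (hδ : δ ∈ S.R) (x : V) :
    FixesInTorus S.corootLattice (S.reflection hδ) (QuotientAddGroup.mk x) ↔
      δ x • S.coroot δ ∈ S.corootLattice := by
  have hdiff : -(S.reflection hδ x) + x = δ x • S.coroot δ := by simp
  rw [← hdiff, ← QuotientAddGroup.eq]
  constructor
  · rintro ⟨f, hf, hfix⟩
    rw [← hf, hfix]
  · intro h
    exact ⟨QuotientAddGroup.map _ _ (S.reflection hδ).toLinearMap.toAddMonoidHom
      (fun y hy ↦ S.reflection_mem_corootLattice hδ hy), fun y ↦ rfl, h⟩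

noncomputable def halfCoroot (γ : Dual ℝ V) : V ⧸ S.corootLattice :=
  QuotientAddGroup.mk ((2⁻¹ : ℝ) • S.coroot γ)

lemma neg_halfCoroot (hγ : γ ∈ S.R) : -S.halfCoroot γ = S.halfCoroot γ := by
  rw [halfCoroot, neg_mk_eq_mk_iff, ← add_smul, ← two_mul, mul_inv_cancel₀ two_ne_zero, one_smul]
  exact AddSubgroup.subset_closure ⟨γ, hγ, rfl⟩

def fixingReflections (t : V ⧸ S.corootLattice) : Set (V ≃ₗ[ℝ] V) :=
  {e | S.IsReflection e ∧ FixesInTorus S.corootLattice e t}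

section FiniteDimensional

variable [FiniteDimensional ℝ V]

noncomputable def toRootPairing : RootPairing S.R ℝ (Dual ℝ V) V :=
  RootPairing.mk' LinearMap.id (Function.Embedding.subtype _)
    ⟨fun α ↦ S.coroot α, fun α β h ↦ Subtype.ext (S.coroot_injOn α.2 β.2 h)⟩
    (fun α ↦ S.root_coroot_two α α.2)
    (by rintro α - ⟨β, rfl⟩; exact ⟨⟨_, S.refl_root_mem α α.2 β β.2⟩, rfl⟩)
    (by
      rintro α - ⟨β, rfl⟩
      obtain ⟨γ, hγ, h⟩ := S.refl_coroot_mem α α.2 β β.2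
      exact ⟨⟨γ, hγ⟩, h.symm⟩)

lemma coroot_neg (hα : α ∈ S.R) : S.coroot (-α) = -S.coroot α := by
  let P := S.toRootPairing
  have h : P.root ⟨-α, S.neg_mem hα⟩ = -P.root ⟨α, hα⟩ := rfl
  exact P.coroot_eq_neg_iff.mpr (P.root_eq_neg_iff.mp h)

lemma reflection_neg (hγ : γ ∈ S.R) (hγ' : -γ ∈ S.R) : S.reflection hγ' = S.reflection hγ := by
  ext x
  simp [S.coroot_neg hγ]

lemma apply_coroot_eq_zero_comm (hα : α ∈ S.R) (hβ : β ∈ S.R) :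
    β (S.coroot α) = 0 ↔ α (S.coroot β) = 0 :=
  S.toRootPairing.pairing_eq_zero_iff' (i := ⟨β, hβ⟩) (j := ⟨α, hα⟩)

variable {S} in
lemma IsOblique.symm (hα : α ∈ S.R) (hβ : β ∈ S.R)
    (h : S.IsOblique α β) : S.IsOblique β α :=
  ⟨h.1.symm, fun h' ↦ h.2.1 (by rw [h', neg_neg]),
    fun h' ↦ h.2.2 ((S.apply_coroot_eq_zero_comm hα hβ).mpr h')⟩

lemma coxeterWeight_mem (hα : α ∈ S.R) (hβ : β ∈ S.R) (h₁ : β ≠ α) (h₂ : β ≠ -α) :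
    ∃ k : ℤ, S.coxeterWeight α β = k ∧ 0 ≤ k ∧ k ≤ 3 := by
  let P := S.toRootPairing
  have : P.IsCrystallographic := ⟨fun i j ↦ by
    obtain ⟨n, hn⟩ := S.crystallographic j j.2 i i.2
    exact ⟨n, by rw [algebraMap_int_eq, eq_intCast, ← hn]; rfl⟩⟩
  let i : S.R := ⟨α, hα⟩
  let j : S.R := ⟨β, hβ⟩
  have hw : S.coxeterWeight α β = P.coxeterWeightIn ℤ i j := by
    have := P.algebraMap_coxeterWeightIn ℤ i j
    rw [algebraMap_int_eq, eq_intCast] at this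
    rw [this, RootPairing.coxeterWeight, mul_comm]
    rfl
  have h4 : P.coxeterWeightIn ℤ i j ≠ 4 :=
    (P.linearIndependent_iff_coxeterWeightIn_ne_four ℤ).mp (S.linearIndependent_of_ne hα hβ h₁ h₂)
  have hmem := P.coxeterWeightIn_mem_set_of_isCrystallographic i j
  refine ⟨_, hw, ?_⟩
  simp only [Set.mem_insert_iff, Set.mem_singleton_iff] at hmem
  omega

lemma coxeterWeight_mem_Icc (hα : α ∈ S.R) (hβ : β ∈ S.R) (h : S.IsOblique α β) :
    ∃ k : ℤ, S.coxeterWeight α β = k ∧ 1 ≤ k ∧ k ≤ 3 := by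
  obtain ⟨k, hk, hk₀, hk₃⟩ := S.coxeterWeight_mem hα hβ h.1 h.2.1
  refine ⟨k, hk, ?_, hk₃⟩
  by_contra! hk₁
  have hβα := (S.apply_coroot_eq_zero_comm hα hβ).not.mp h.2.2
  have : S.coxeterWeight α β ≠ 0 := mul_ne_zero h.2.2 hβα
  exact this (by rw [hk]; exact_mod_cast (by omega : k = 0))

section RankTwo

variable (hdim : finrank ℝ V = 2)
include hdim

lemma eq_or_eq_neg_of_apply_coroot_eq_zero (hα : α ∈ S.R) (hβ : β ∈ S.R) (hγ : γ ∈ S.R)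
    (hβα : β (S.coroot α) = 0) (hγα : γ (S.coroot α) = 0) : γ = β ∨ γ = -β := by
  by_contra! h
  exact S.coroot_ne_zero hα (eq_zero_of_linearIndependent_of_apply_eq_zero hdim
    (S.linearIndependent_of_ne hβ hγ h.1 h.2) hβα hγα)

lemma isOblique_of_notMem (hα : α ∈ S.R) (hα' : α' ∈ S.R) (hβ : β ∈ S.R)
    (hαα' : α' (S.coroot α) = 0) (h : β ∉ [α, -α, α', -α']) : S.IsOblique α β := by
  simp only [List.mem_cons, List.not_mem_nil, or_false, not_or] at h
  refine ⟨h.1, h.2.1, fun hβα ↦ ?_⟩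
  rcases S.eq_or_eq_neg_of_apply_coroot_eq_zero hdim hα hα' hβ hαα' hβα with h' | h'
  exacts [h.2.2.1 h', h.2.2.2 h']

lemma smul_coroot_add_smul_coroot (hα : α ∈ S.R) (hβ : β ∈ S.R) (hαβ : β (S.coroot α) = 0)
    (x : V) : α x • S.coroot α + β x • S.coroot β = (2 : ℝ) • x := by
  have hβα : α (S.coroot β) = 0 := (S.apply_coroot_eq_zero_comm hα hβ).mp hαβ
  obtain ⟨h₁, h₂⟩ := S.ne_of_apply_coroot_eq_zero hα hαβ
  rw [← sub_eq_zero]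
  refine eq_zero_of_linearIndependent_of_apply_eq_zero hdim
    (S.linearIndependent_of_ne hα hβ h₁ h₂) ?_ ?_ <;>
  simp [S.root_coroot_two α hα, S.root_coroot_two β hβ, hαβ, hβα, mul_comm]

lemma reflection_mul_reflection (hα : α ∈ S.R) (hβ : β ∈ S.R) (hαβ : β (S.coroot α) = 0) :
    S.reflection hα * S.reflection hβ = LinearEquiv.neg ℝ := by
  ext x
  have hβα : α (S.coroot β) = 0 := (S.apply_coroot_eq_zero_comm hα hβ).mp hαβ
  have := S.smul_coroot_add_smul_coroot hdim hα hβ hαβ x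
  simp only [LinearEquiv.mul_apply, reflection_apply, map_sub, map_smul, hβα]
  rw [zero_smul, sub_zero, sub_sub, this, LinearEquiv.neg_apply]
  module

lemma coxeterWeight_add_coxeterWeight (hα : α ∈ S.R) (hβ : β ∈ S.R) (hγ : γ ∈ S.R)
    (hαβ : β (S.coroot α) = 0) : S.coxeterWeight α γ + S.coxeterWeight β γ = 4 := by
  have := congrArg γ (S.smul_coroot_add_smul_coroot hdim hα hβ hαβ (S.coroot γ))
  simp only [map_add, map_smul, smul_eq_mul, S.root_coroot_two γ hγ] at this
  simp only [coxeterWeight]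
  linarith

/-- Three covectors on a plane are linearly dependent, so the matrix of pairings of `α, β, γ` with
their coroots is singular. This fixes the sum and the product of the two products `p, q` of
pairings around the triangle, and forces `(p - q)² < 0` when the weight of `α, β` is `2`. -/
lemma coxeterWeight_ne_two (hα : α ∈ S.R) (hβ : β ∈ S.R) (hγ : γ ∈ S.R)
    (hαγ : S.coxeterWeight α γ ∈ Set.Icc 1 3) (hβγ : S.coxeterWeight β γ ∈ Set.Icc 1 3) :
    S.coxeterWeight α β ≠ 2 := by
  intro hαβ
  have hdet := det_apply_eq_zero_of_finrank_lt (by simp [hdim]) ![α, β, γ]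
    ![S.coroot α, S.coroot β, S.coroot γ]
  simp only [Matrix.det_fin_three, Matrix.of_apply, Matrix.cons_val_zero, Matrix.cons_val_one,
    Matrix.cons_val, S.root_coroot_two α hα, S.root_coroot_two β hβ, S.root_coroot_two γ hγ] at hdet
  set v := S.coxeterWeight α γ
  set w := S.coxeterWeight β γ
  set p := α (S.coroot β) * β (S.coroot γ) * γ (S.coroot α)
  set q := α (S.coroot γ) * β (S.coroot α) * γ (S.coroot β)
  have hpq : p * q = 2 * v * w := by
    rw [← hαβ]; simp only [p, q, v, w, coxeterWeight]; ring
  have hsum : p + q = 2 * (v + w) - 4 := by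
    simp only [v, w, coxeterWeight] at hαβ ⊢; linarith
  have key : (p - q) ^ 2 = (p + q) ^ 2 - 4 * (p * q) := by ring
  rw [hsum, hpq] at key
  obtain ⟨hv₁, hv₃⟩ := hαγ
  obtain ⟨hw₁, hw₃⟩ := hβγ
  nlinarith [sq_nonneg (p - q), mul_nonneg (sub_nonneg.2 hv₁) (sub_nonneg.2 hv₃),
    mul_nonneg (sub_nonneg.2 hw₁) (sub_nonneg.2 hw₃)]

/-- The Cartan matrix of `α, β` has determinant `4 - 3 = 1`, so every coroot has integral
coordinates in the basis `α∨, β∨`. -/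
lemma corootLattice_eq_closure_pair (hα : α ∈ S.R) (hβ : β ∈ S.R) (h : S.IsOblique α β)
    (h3 : S.coxeterWeight α β = 3) :
    S.corootLattice = AddSubgroup.closure {S.coroot α, S.coroot β} := by
  refine le_antisymm ((AddSubgroup.closure_le _).mpr ?_) ((AddSubgroup.closure_le _).mpr ?_)
  · rintro _ ⟨γ, hγ, rfl⟩
    obtain ⟨n, hn⟩ := S.crystallographic α hα β hβ
    obtain ⟨m, hm⟩ := S.crystallographic β hβ α hα
    obtain ⟨u, hu⟩ := S.crystallographic γ hγ α hα
    obtain ⟨v, hv⟩ := S.crystallographic γ hγ β hβ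
    rw [coxeterWeight, hn, hm] at h3
    refine AddSubgroup.mem_closure_pair.mpr ⟨2 * u - m * v, 2 * v - n * u, ?_⟩
    rw [← sub_eq_zero]
    refine eq_zero_of_linearIndependent_of_apply_eq_zero hdim
      (S.linearIndependent_of_ne hα hβ h.1 h.2.1) ?_ ?_ <;>
    simp only [map_sub, map_add, map_zsmul, S.root_coroot_two α hα, S.root_coroot_two β hβ, hn,
      hm, hu, hv, zsmul_eq_mul] <;> push_cast
    · linear_combination (-(u : ℝ)) * h3
    · linear_combination (-(v : ℝ)) * h3
  · rintro _ (rfl | rfl)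
    exacts [AddSubgroup.subset_closure ⟨α, hα, rfl⟩, AddSubgroup.subset_closure ⟨β, hβ, rfl⟩]

variable (hcard : S.R.card = 12)
include hcard

lemma coxeterWeight_eq_one_or_three (hα : α ∈ S.R) (hβ : β ∈ S.R) (h : S.IsOblique α β) :
    S.coxeterWeight α β = 1 ∨ S.coxeterWeight α β = 3 := by
  obtain ⟨α', hα', hαα'⟩ := S.exists_apply_coroot_eq_zero (by simp [hcard]) hα
  obtain ⟨β', hβ', hββ'⟩ := S.exists_apply_coroot_eq_zero (by simp [hcard]) hβ
  obtain ⟨γ, hγ, hγl⟩ := S.exists_mem_notMem [α, -α, α', -α', β, -β, β', -β'] (by simp [hcard])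
  have hIcc : ∀ {δ}, δ ∈ S.R → S.IsOblique δ γ → S.coxeterWeight δ γ ∈ Set.Icc 1 3 := by
    intro δ hδ hδγ
    obtain ⟨k, hk, hk₁, hk₃⟩ := S.coxeterWeight_mem_Icc hδ hγ hδγ
    exact hk ▸ ⟨by exact_mod_cast hk₁, by exact_mod_cast hk₃⟩
  have hne := S.coxeterWeight_ne_two hdim hα hβ hγ
    (hIcc hα (S.isOblique_of_notMem hdim hα hα' hγ hαα' (by simp_all)))
    (hIcc hβ (S.isOblique_of_notMem hdim hβ hβ' hγ hββ' (by simp_all)))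
  obtain ⟨k, hk, hk₁, hk₃⟩ := S.coxeterWeight_mem_Icc hα hβ h
  rw [hk] at hne ⊢
  have : k ≠ 2 := fun h2 ↦ hne (by exact_mod_cast h2)
  have : k = 1 ∨ k = 3 := by omega
  rcases this with rfl | rfl <;> simp

lemma odd_apply_coroot (hα : α ∈ S.R) (hβ : β ∈ S.R) (h : S.IsOblique α β) :
    ∃ n : ℤ, Odd n ∧ β (S.coroot α) = n := by
  obtain ⟨n, hn⟩ := S.crystallographic α hα β hβ
  obtain ⟨m, hm⟩ := S.crystallographic β hβ α hα
  refine ⟨n, ?_, hn⟩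
  have hnm : n * m = 1 ∨ n * m = 3 := by
    have := S.coxeterWeight_eq_one_or_three hdim hcard hα hβ h
    rw [coxeterWeight, hn, hm] at this
    exact_mod_cast this
  exact (Int.odd_mul.mp (by rcases hnm with h | h <;> rw [h] <;> decide)).1

lemma exists_coxeterWeight_eq_three :
    ∃ α ∈ S.R, ∃ β ∈ S.R, S.IsOblique α β ∧ S.coxeterWeight α β = 3 := by
  obtain ⟨α, hα⟩ : S.R.Nonempty := Finset.card_pos.mp (by omega)
  obtain ⟨α', hα', hαα'⟩ := S.exists_apply_coroot_eq_zero (by simp [hcard]) hα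
  have hα'α := (S.apply_coroot_eq_zero_comm hα hα').mp hαα'
  obtain ⟨β, hβ, hβl⟩ := S.exists_mem_notMem [α, -α, α', -α'] (by simp [hcard])
  have hαβ := S.isOblique_of_notMem hdim hα hα' hβ hαα' hβl
  have hα'β := S.isOblique_of_notMem hdim hα' hα hβ hα'α (by simp_all)
  have hsum := S.coxeterWeight_add_coxeterWeight hdim hα hα' hβ hαα'
  rcases S.coxeterWeight_eq_one_or_three hdim hcard hα hβ hαβ with h | h
  · exact ⟨α', hα', β, hβ, hα'β, by linarith⟩
  · exact ⟨α, hα, β, hβ, hαβ, h⟩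

lemma halfCoroot_ne_zero (hγ : γ ∈ S.R) : S.halfCoroot γ ≠ 0 := by
  obtain ⟨γ', hγ', hγγ'⟩ := S.exists_apply_coroot_eq_zero (by simp [hcard]) hγ
  obtain ⟨δ, hδ, hδl⟩ := S.exists_mem_notMem [γ, -γ, γ', -γ'] (by simp [hcard])
  obtain ⟨n, hn, hδγ⟩ := S.odd_apply_coroot hdim hcard hγ hδ
    (S.isOblique_of_notMem hdim hγ hγ' hδ hγγ' hδl)
  intro h0
  obtain ⟨z, hz⟩ := S.exists_intCast_eq_apply hδ ((QuotientAddGroup.eq_zero_iff _).mp h0)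
  rw [map_smul, hδγ, smul_eq_mul] at hz
  exact two_inv_mul_ne_intCast hn z hz

lemma halfCoroot_ne (hγ : γ ∈ S.R) (hδ : δ ∈ S.R) (h : S.IsOblique γ δ) :
    S.halfCoroot γ ≠ S.halfCoroot δ := by
  obtain ⟨n, hn, hγδ⟩ := S.odd_apply_coroot hdim hcard hδ hγ (h.symm hγ hδ)
  intro heq
  obtain ⟨z, hz⟩ := S.exists_intCast_eq_apply hγ (QuotientAddGroup.eq.mp heq)
  simp only [map_add, map_neg, map_smul, smul_eq_mul, S.root_coroot_two γ hγ, hγδ] at hz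
  exact two_inv_mul_ne_intCast hn (z + 1) (by push_cast; linarith)

lemma not_fixesInTorus_halfCoroot (hγ : γ ∈ S.R) (hδ : δ ∈ S.R) (h : S.IsOblique γ δ) :
    ¬ FixesInTorus S.corootLattice (S.reflection hδ) (S.halfCoroot γ) := by
  obtain ⟨n, hn, hδγ⟩ := S.odd_apply_coroot hdim hcard hγ hδ h
  obtain ⟨m, hm, hγδ⟩ := S.odd_apply_coroot hdim hcard hδ hγ (h.symm hγ hδ)
  rw [halfCoroot, fixesInTorus_reflection_iff]
  intro hmem
  obtain ⟨z, hz⟩ := S.exists_intCast_eq_apply hγ hmem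
  simp only [map_smul, smul_eq_mul, hδγ, hγδ] at hz
  exact two_inv_mul_ne_intCast (hn.mul hm) z (by push_cast; linarith)

lemma fixingReflections_halfCoroot (hγ : γ ∈ S.R) (hγ' : γ' ∈ S.R)
    (hγγ' : γ' (S.coroot γ) = 0) :
    S.fixingReflections (S.halfCoroot γ) = {S.reflection hγ, S.reflection hγ'} := by
  ext e
  simp only [fixingReflections, isReflection_iff, Set.mem_ofPred_eq, Set.mem_insert_iff,
    Set.mem_singleton_iff]
  constructor
  · rintro ⟨⟨ρ, hρ, rfl⟩, hfix⟩
    by_cases hρl : ρ ∈ [γ, -γ, γ', -γ']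
    · simp only [List.mem_cons, List.not_mem_nil, or_false] at hρl
      rcases hρl with rfl | rfl | rfl | rfl
      exacts [.inl rfl, .inl (S.reflection_neg hγ hρ), .inr rfl, .inr (S.reflection_neg hγ' hρ)]
    · exact absurd hfix (S.not_fixesInTorus_halfCoroot hdim hcard hγ hρ
        (S.isOblique_of_notMem hdim hγ hγ' hρ hγγ' hρl))
  · rintro (rfl | rfl)
    · refine ⟨⟨γ, hγ, rfl⟩, (S.fixesInTorus_reflection_iff hγ _).mpr ?_⟩
      rw [map_smul, S.root_coroot_two γ hγ, smul_eq_mul, inv_mul_cancel₀ two_ne_zero, one_smul]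
      exact AddSubgroup.subset_closure ⟨γ, hγ, rfl⟩
    · refine ⟨⟨γ', hγ', rfl⟩, (S.fixesInTorus_reflection_iff hγ' _).mpr ?_⟩
      rw [map_smul, hγγ', smul_zero, zero_smul]
      exact zero_mem _

lemma ncard_fixingReflections_halfCoroot (hγ : γ ∈ S.R) :
    (S.fixingReflections (S.halfCoroot γ)).ncard = 2 := by
  obtain ⟨γ', hγ', hγγ'⟩ := S.exists_apply_coroot_eq_zero (by simp [hcard]) hγ
  rw [S.fixingReflections_halfCoroot hdim hcard hγ hγ' hγγ']
  refine Set.ncard_pair fun h ↦ S.coroot_ne_zero hγ ?_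
  simpa [S.root_coroot_two γ hγ, hγγ'] using LinearEquiv.congr_fun h (S.coroot γ)

lemma mul_eq_neg_of_mem_fixingReflections_halfCoroot (hγ : γ ∈ S.R) {e₁ e₂ : V ≃ₗ[ℝ] V}
    (he₁ : e₁ ∈ S.fixingReflections (S.halfCoroot γ))
    (he₂ : e₂ ∈ S.fixingReflections (S.halfCoroot γ)) (hne : e₁ ≠ e₂) :
    e₁ * e₂ = LinearEquiv.neg ℝ := by
  obtain ⟨γ', hγ', hγγ'⟩ := S.exists_apply_coroot_eq_zero (by simp [hcard]) hγ
  have hγ'γ := (S.apply_coroot_eq_zero_comm hγ hγ').mp hγγ'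
  rw [S.fixingReflections_halfCoroot hdim hcard hγ hγ' hγγ'] at he₁ he₂
  rcases he₁ with rfl | rfl <;> rcases he₂ with rfl | rfl
  · exact absurd rfl hne
  · exact S.reflection_mul_reflection hdim hγ hγ' hγγ'
  · exact S.reflection_mul_reflection hdim hγ' hγ hγ'γ
  · exact absurd rfl hne

lemma fixingReflections_halfCoroot_ne (hγ : γ ∈ S.R) (hδ : δ ∈ S.R) (h : S.IsOblique γ δ) :
    S.fixingReflections (S.halfCoroot γ) ≠ S.fixingReflections (S.halfCoroot δ) := by
  obtain ⟨δ', hδ', hδδ'⟩ := S.exists_apply_coroot_eq_zero (by simp [hcard]) hδ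
  intro heq
  have hmem : S.reflection hδ ∈ S.fixingReflections (S.halfCoroot δ) := by
    rw [S.fixingReflections_halfCoroot hdim hcard hδ hδ' hδδ']
    exact .inl rfl
  rw [← heq] at hmem
  exact S.not_fixesInTorus_halfCoroot hdim hcard hγ hδ h hmem.2

/-- Taking `α, β` with Coxeter weight `3` and `γ` off the lines of `α, β` and of their orthogonal
roots, the point `[(α∨ + β∨)/2]` must be `[γ∨/2]`, as the latter differs from the other three. -/
lemma exists_setOf_neg_eq_self :
    ∃ r : Fin 3 → Dual ℝ V, (∀ i, r i ∈ S.R) ∧ (∀ i j, i ≠ j → S.IsOblique (r i) (r j)) ∧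
      {t : V ⧸ S.corootLattice | -t = t} = insert 0 (Set.range fun i ↦ S.halfCoroot (r i)) := by
  obtain ⟨α, hα, β, hβ, hαβ, h3⟩ := S.exists_coxeterWeight_eq_three hdim hcard
  obtain ⟨α', hα', hαα'⟩ := S.exists_apply_coroot_eq_zero (by simp [hcard]) hα
  obtain ⟨β', hβ', hββ'⟩ := S.exists_apply_coroot_eq_zero (by simp [hcard]) hβ
  obtain ⟨γ, hγ, hγl⟩ := S.exists_mem_notMem [α, -α, α', -α', β, -β, β', -β'] (by simp [hcard])
  have hαγ := S.isOblique_of_notMem hdim hα hα' hγ hαα' (by simp_all)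
  have hβγ := S.isOblique_of_notMem hdim hβ hβ' hγ hββ' (by simp_all)
  have hmem := fun t (ht : -t = t) ↦
    mem_of_neg_eq_self_of_eq_closure_pair (S.corootLattice_eq_closure_pair hdim hα hβ hαβ h3) ht
  have hγ_eq : S.halfCoroot γ = QuotientAddGroup.mk ((2⁻¹ : ℝ) • (S.coroot α + S.coroot β)) := by
    rcases hmem _ (S.neg_halfCoroot hγ) with h | h | h | h
    · exact absurd h (S.halfCoroot_ne_zero hdim hcard hγ)
    · exact absurd h (S.halfCoroot_ne hdim hcard hα hγ hαγ).symm
    · exact absurd h (S.halfCoroot_ne hdim hcard hβ hγ hβγ).symm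
    · exact h
  refine ⟨![α, β, γ], fun i ↦ by fin_cases i <;> assumption, fun i j hij ↦ ?_, ?_⟩
  · fin_cases i <;> fin_cases j
    all_goals first
      | exact absurd rfl hij
      | assumption
      | exact IsOblique.symm ‹_› ‹_› ‹_›
  · have hrange : (Set.range fun i ↦ S.halfCoroot (![α, β, γ] i)) =
        {S.halfCoroot α, S.halfCoroot β, S.halfCoroot γ} := by
      ext t
      simp [Fin.exists_fin_succ, eq_comm]
    rw [hrange]
    ext t
    refine ⟨fun ht ↦ ?_, ?_⟩
    · rw [hγ_eq]
      exact hmem t ht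
    · rintro (rfl | rfl | rfl | rfl)
      exacts [neg_zero, S.neg_halfCoroot hα, S.neg_halfCoroot hβ, S.neg_halfCoroot hγ]

lemma ncard_setOf_neg_eq_self : {t : V ⧸ S.corootLattice | -t = t}.ncard = 4 := by
  obtain ⟨r, hr, hobl, hT⟩ := S.exists_setOf_neg_eq_self hdim hcard
  rw [hT, Set.ncard_insert_of_notMem, Set.ncard_range_of_injective, Nat.card_eq_fintype_card,
    Fintype.card_fin]
  · exact fun i j hij ↦ by_contra fun h ↦ S.halfCoroot_ne hdim hcard (hr i) (hr j) (hobl i j h) hij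
  · rintro ⟨i, hi⟩
    exact S.halfCoroot_ne_zero hdim hcard (hr i) hi

lemma neg_mem_weylGroup : (LinearEquiv.neg ℝ : V ≃ₗ[ℝ] V) ∈ S.weylGroup := by
  obtain ⟨α, hα⟩ : S.R.Nonempty := Finset.card_pos.mp (by omega)
  obtain ⟨α', hα', hαα'⟩ := S.exists_apply_coroot_eq_zero (by simp [hcard]) hα
  rw [← S.reflection_mul_reflection hdim hα hα' hαα']
  exact mul_mem (Subgroup.subset_closure ⟨α, hα, fun _ ↦ rfl⟩)
    (Subgroup.subset_closure ⟨α', hα', fun _ ↦ rfl⟩)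

end RankTwo

end FiniteDimensional

end RedCrystRootSystem

/-- Let `(V, R, α ↦ α∨)` be a reduced crystallographic root system of
type `G₂` (i.e. `dim V = 2` and there are exactly 12 roots), with coroot lattice `Q∨`,
Weyl group `W`, and torus `T = V ⧸ Q∨`.  Then: (i) `-id_V ∈ W`; (ii) the fixed-point set
`T^{-id} = { t : -t = t }` has exactly four elements; (iii) each non-zero `t ∈ T^{-id}`
is fixed by exactly two of the reflections `s_α` (counting `s_α = s_{-α}` once), and the
product of these two reflections is `-id_V`; (iv) the resulting two-element sets of
reflections attached to the three non-zero elements of `T^{-id}` are pairwise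
distinct. -/
theorem statement5 {V : Type*} [AddCommGroup V] [Module ℝ V] [FiniteDimensional ℝ V]
    (S : RedCrystRootSystem V)
    (hdim : Module.finrank ℝ V = 2) (hcard : S.R.card = 12) :
    -- (i) `-id ∈ W`
    ((LinearEquiv.neg ℝ : V ≃ₗ[ℝ] V) ∈ S.weylGroup) ∧
    -- (ii) `T^{-id}` has exactly four elements
    ({t : V ⧸ S.corootLattice | -t = t}.ncard = 4) ∧
    -- (iii) each non-zero `t ∈ T^{-id}` is fixed by exactly two reflections,
    -- whose product is `-id`
    (∀ t : V ⧸ S.corootLattice, -t = t → t ≠ 0 →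
      {e : V ≃ₗ[ℝ] V | S.IsReflection e ∧ FixesInTorus S.corootLattice e t}.ncard = 2 ∧
      ∀ e₁ e₂ : V ≃ₗ[ℝ] V,
        e₁ ∈ {e : V ≃ₗ[ℝ] V | S.IsReflection e ∧ FixesInTorus S.corootLattice e t} →
        e₂ ∈ {e : V ≃ₗ[ℝ] V | S.IsReflection e ∧ FixesInTorus S.corootLattice e t} →
        e₁ ≠ e₂ → e₁ * e₂ = (LinearEquiv.neg ℝ : V ≃ₗ[ℝ] V)) ∧
    -- (iv) different non-zero elements of `T^{-id}` have different pairs of reflections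
    (∀ t t' : V ⧸ S.corootLattice, -t = t → -t' = t' → t ≠ 0 → t' ≠ 0 → t ≠ t' →
      {e : V ≃ₗ[ℝ] V | S.IsReflection e ∧ FixesInTorus S.corootLattice e t} ≠
        {e : V ≃ₗ[ℝ] V | S.IsReflection e ∧ FixesInTorus S.corootLattice e t'}) := by
  obtain ⟨r, hr, hobl, hT⟩ := S.exists_setOf_neg_eq_self hdim hcard
  have hpoint : ∀ t : V ⧸ S.corootLattice, -t = t → t ≠ 0 → ∃ i, t = S.halfCoroot (r i) := by
    intro t ht ht₀
    have ht : t ∈ {t : V ⧸ S.corootLattice | -t = t} := ht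
    rw [hT] at ht
    obtain ⟨i, rfl⟩ := ht.resolve_left ht₀
    exact ⟨i, rfl⟩
  refine ⟨S.neg_mem_weylGroup hdim hcard, S.ncard_setOf_neg_eq_self hdim hcard,
    fun t ht ht₀ ↦ ?_, fun t t' ht ht' ht₀ ht₀' hne ↦ ?_⟩
  · obtain ⟨i, rfl⟩ := hpoint t ht ht₀
    exact ⟨S.ncard_fixingReflections_halfCoroot hdim hcard (hr i),
      fun e₁ e₂ ↦ S.mul_eq_neg_of_mem_fixingReflections_halfCoroot hdim hcard (hr i)⟩
  · obtain ⟨i, rfl⟩ := hpoint t ht ht₀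
    obtain ⟨j, rfl⟩ := hpoint t' ht' ht₀'
    exact S.fixingReflections_halfCoroot_ne hdim hcard (hr i) (hr j)
      (hobl i j fun hij ↦ hne (by rw [hij]))
end
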